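/- With p_{m,ℓ}(z) = sqrt(z) * ((1+sqrt(z))^{m+ℓ+1} + (1-sqrt(z))^{m+ℓ+1}) / ((1+sqrt(z))^{m+ℓ+1} - (1-sqrt(z))^{m+ℓ+1}) and ℓ ∈ {m-1, m}, the poles of p_{m,ℓ}(z) as a rational function of z are exactly the ℓ numbers z = -tan^2(jπ/(m+ℓ+1)) for j = 1, ..., ℓ. -/

import Mathlib

/-!
Put `n = m + ℓ + 1`. Sorting the binomial expansion of `(1 + s) ^ n` into even and odd powers
gives `(1 ± s) ^ n = E(s²) ± s O(s²)` with `E = ∑ C(n, 2k) Xᵏ` and `O = ∑ C(n, 2k+1) Xᵏ`, so the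
approximant is `E / O`, of degrees `⌊n/2⌋ = m` and `⌊(n-1)/2⌋ = ℓ`. Multiplying the two expansions
gives `E² - X O² = (1 - X) ^ n`; as `E(1) ≠ 0`, the polynomials `E` and `O` are coprime.
For `s = i tan θ` de Moivre's formula turns the odd expansion into
`sin (nθ) = cosⁿ θ · tan θ · O(-tan² θ)`, so `O` vanishes at the `ℓ` distinct points
`-tan² (jπ/n)`, `1 ≤ j ≤ ℓ`, which are therefore all of its roots.
-/

open Finset Polynomial Real

theorem Finset.sum_range_two_mul {M : Type*} [AddCommMonoid M] (f : ℕ → M) (N : ℕ) :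
    ∑ i ∈ range (2 * N), f i = ∑ k ∈ range N, (f (2 * k) + f (2 * k + 1)) := by
  induction N with
  | zero => simp
  | succ N ih =>
    rw [mul_add, mul_one, sum_range_succ, sum_range_succ, sum_range_succ, ih, add_assoc]

theorem one_add_pow_eq_sum_range {R : Type*} [CommSemiring R] (s : R) {n N : ℕ} (hN : n < N) :
    (1 + s) ^ n = ∑ i ∈ range N, (n.choose i : R) * s ^ i := by
  rw [add_comm, add_pow]
  refine sum_subset (range_subset_range.2 hN) (fun i _ hi => ?_) |>.trans (sum_congr rfl ?_)
  · rw [Nat.choose_eq_zero_of_lt (by simpa using hi)]; simp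
  · intro i _; rw [one_pow, mul_one, mul_comm]

theorem Polynomial.isRoot_iff_mem_of_natDegree_le_card {R : Type*} [CommRing R] [IsDomain R]
    [DecidableEq R] {p : R[X]} (hp : p ≠ 0) {S : Finset R} (hS : ∀ x ∈ S, p.IsRoot x)
    (hcard : p.natDegree ≤ S.card) (x : R) : p.IsRoot x ↔ x ∈ S := by
  have hsub : S ⊆ p.roots.toFinset := fun y hy => by
    rw [Multiset.mem_toFinset, mem_roots hp]
    exact hS y hy
  have hcard' : p.roots.toFinset.card ≤ S.card :=
    (Multiset.toFinset_card_le _).trans ((card_roots' p).trans hcard)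
  rw [← mem_roots hp, ← Multiset.mem_toFinset, ← eq_of_subset_of_card_le hsub hcard']

theorem Real.strictAntiOn_neg_tan_sq : StrictAntiOn (fun x => -tan x ^ 2) (Set.Ico 0 (π / 2)) := by
  intro a ha b hb hab
  have htan := strictMonoOn_tan ⟨by linarith [ha.1, pi_pos], ha.2⟩
    ⟨by linarith [hb.1, pi_pos], hb.2⟩ hab
  exact neg_lt_neg
    (pow_lt_pow_left₀ htan (tan_nonneg_of_nonneg_of_le_pi_div_two ha.1 ha.2.le) two_ne_zero)

theorem Real.nat_mul_pi_div_mem_Ioo {n j : ℕ} (hj : 0 < j) (hjn : 2 * j < n) :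
    j * π / n ∈ Set.Ioo 0 (π / 2) := by
  have hn : (0 : ℝ) < n := by exact_mod_cast (show 0 < n by omega)
  have hjn' : (2 * j : ℝ) < n := by exact_mod_cast hjn
  refine ⟨by positivity, ?_⟩
  rw [div_lt_div_iff₀ hn two_pos]
  nlinarith [pi_pos]

noncomputable def evenBinomialPoly (R : Type*) [Semiring R] (n : ℕ) : R[X] :=
  ∑ k ∈ range (n + 1), C (n.choose (2 * k) : R) * X ^ k

noncomputable def oddBinomialPoly (R : Type*) [Semiring R] (n : ℕ) : R[X] :=
  ∑ k ∈ range (n + 1), C (n.choose (2 * k + 1) : R) * X ^ k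

section Coeff

variable (R : Type*) [Semiring R] (n : ℕ)

theorem coeff_evenBinomialPoly (k : ℕ) : (evenBinomialPoly R n).coeff k = n.choose (2 * k) := by
  simp only [evenBinomialPoly, finsetSum_coeff, coeff_C_mul_X_pow, sum_ite_eq, mem_range]
  split_ifs with hk
  · rfl
  · rw [Nat.choose_eq_zero_of_lt (by omega), Nat.cast_zero]

theorem coeff_oddBinomialPoly (k : ℕ) :
    (oddBinomialPoly R n).coeff k = n.choose (2 * k + 1) := by
  simp only [oddBinomialPoly, finsetSum_coeff, coeff_C_mul_X_pow, sum_ite_eq, mem_range]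
  split_ifs with hk
  · rfl
  · rw [Nat.choose_eq_zero_of_lt (by omega), Nat.cast_zero]

variable [CharZero R]

theorem natDegree_evenBinomialPoly : (evenBinomialPoly R n).natDegree = n / 2 := by
  refine natDegree_eq_of_le_of_coeff_ne_zero (natDegree_le_iff_coeff_eq_zero.2 fun k hk => ?_) ?_
  · rw [coeff_evenBinomialPoly, Nat.choose_eq_zero_of_lt (by omega), Nat.cast_zero]
  · rw [coeff_evenBinomialPoly]
    exact Nat.cast_ne_zero.2 (Nat.choose_pos (by omega)).ne'

theorem natDegree_oddBinomialPoly_succ : (oddBinomialPoly R (n + 1)).natDegree = n / 2 := by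
  refine natDegree_eq_of_le_of_coeff_ne_zero (natDegree_le_iff_coeff_eq_zero.2 fun k hk => ?_) ?_
  · rw [coeff_oddBinomialPoly, Nat.choose_eq_zero_of_lt (by omega), Nat.cast_zero]
  · rw [coeff_oddBinomialPoly]
    exact Nat.cast_ne_zero.2 (Nat.choose_pos (by omega)).ne'

theorem oddBinomialPoly_ne_zero (hn : n ≠ 0) : oddBinomialPoly R n ≠ 0 := fun h => by
  have := congrArg (coeff · 0) h
  simp [coeff_oddBinomialPoly, hn] at this

end Coeff

section Aeval

variable {R A : Type*} [CommSemiring R] [CommRing A] [Algebra R A] (n : ℕ)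

theorem aeval_evenBinomialPoly (x : A) :
    aeval x (evenBinomialPoly R n) = ∑ k ∈ range (n + 1), (n.choose (2 * k) : A) * x ^ k := by
  simp [evenBinomialPoly]

theorem aeval_oddBinomialPoly (x : A) :
    aeval x (oddBinomialPoly R n) = ∑ k ∈ range (n + 1), (n.choose (2 * k + 1) : A) * x ^ k := by
  simp [oddBinomialPoly]

theorem one_add_pow_eq_aeval (s : A) :
    (1 + s) ^ n =
      aeval (s ^ 2) (evenBinomialPoly R n) + s * aeval (s ^ 2) (oddBinomialPoly R n) := by
  rw [one_add_pow_eq_sum_range s (by omega : n < 2 * (n + 1)), sum_range_two_mul,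
    aeval_evenBinomialPoly, aeval_oddBinomialPoly, mul_sum, ← sum_add_distrib]
  refine sum_congr rfl fun k _ => ?_
  ring

theorem one_sub_pow_eq_aeval (s : A) :
    (1 - s) ^ n =
      aeval (s ^ 2) (evenBinomialPoly R n) - s * aeval (s ^ 2) (oddBinomialPoly R n) := by
  simpa [sub_eq_add_neg] using one_add_pow_eq_aeval (R := R) n (-s)

end Aeval

theorem evenBinomialPoly_sq_sub_X_mul_oddBinomialPoly_sq {R : Type*} [CommRing R] [IsDomain R]
    (n : ℕ) : evenBinomialPoly R n ^ 2 - X * oddBinomialPoly R n ^ 2 = (1 - X) ^ n := by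
  rw [← sub_eq_zero]
  have hcomp : (evenBinomialPoly R n ^ 2 - X * oddBinomialPoly R n ^ 2 - (1 - X) ^ n).comp
      (X ^ 2) = 0 := by
    have hfactor : (1 - X ^ 2 : R[X]) ^ n = (1 + X) ^ n * (1 - X) ^ n := by rw [← mul_pow]; ring
    simp only [comp_eq_aeval, map_sub, map_mul, map_pow, map_one, aeval_X]
    rw [hfactor, one_add_pow_eq_aeval (R := R) n (X : R[X]),
      one_sub_pow_eq_aeval (R := R) n (X : R[X])]
    ring
  refine (comp_eq_zero_iff.1 hcomp).resolve_right fun ⟨_, hconst⟩ => ?_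
  simpa using congrArg natDegree hconst

theorem isCoprime_evenBinomialPoly_oddBinomialPoly {K : Type*} [Field K] [CharZero K] (n : ℕ) :
    IsCoprime (evenBinomialPoly K n) (oddBinomialPoly K n) := by
  have heval : (evenBinomialPoly K n).eval 1 ≠ 0 := by
    rw [← coe_aeval_eq_eval, aeval_evenBinomialPoly]
    simp only [one_pow, mul_one]
    exact_mod_cast (sum_pos' (fun _ _ => Nat.zero_le _) ⟨0, by simp, by simp⟩).ne'
  have hcop : IsCoprime ((1 - X) ^ n) (evenBinomialPoly K n) := by
    refine IsCoprime.pow_left ?_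
    rw [← neg_sub, ← C_1]
    exact ((irreducible_X_sub_C 1).coprime_iff_not_dvd.2 (mt dvd_iff_isRoot.1 heval)).neg_left
  rw [← evenBinomialPoly_sq_sub_X_mul_oddBinomialPoly_sq] at hcop
  obtain ⟨u, v, huv⟩ := hcop
  exact ⟨u * evenBinomialPoly K n + v, -(u * X * oddBinomialPoly K n), by linear_combination huv⟩

theorem eval_evenBinomialPoly_div_eval_oddBinomialPoly (n : ℕ) {z : ℝ} (hz : 0 < z) :
    (evenBinomialPoly ℝ n).eval z / (oddBinomialPoly ℝ n).eval z =
      √z * ((1 + √z) ^ n + (1 - √z) ^ n) / ((1 + √z) ^ n - (1 - √z) ^ n) := by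
  rw [one_add_pow_eq_aeval (R := ℝ), one_sub_pow_eq_aeval (R := ℝ), sq_sqrt hz.le,
    coe_aeval_eq_eval, add_add_sub_cancel, add_sub_sub_cancel, ← two_mul, ← two_mul,
    mul_left_comm, ← mul_assoc 2, ← mul_assoc 2, mul_div_mul_left _ _ (by positivity)]

theorem Real.sin_nat_mul_eq_cos_pow_mul_tan_mul_eval_oddBinomialPoly (n : ℕ) {θ : ℝ}
    (hθ : cos θ ≠ 0) :
    sin (n * θ) = cos θ ^ n * tan θ * (oddBinomialPoly ℝ n).eval (-tan θ ^ 2) := by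
  set t := tan θ
  have hpolar : Complex.cos θ + Complex.sin θ * Complex.I = cos θ * (1 + t * Complex.I) := by
    have hc : Complex.cos θ ≠ 0 := by exact_mod_cast hθ
    simp only [t, tan_eq_sin_div_cos]
    push_cast
    field_simp
  have hsq : ((t : ℂ) * Complex.I) ^ 2 = algebraMap ℝ ℂ (-t ^ 2) := by
    simp [mul_pow]
  have hexpand : ((cos θ : ℂ) * (1 + t * Complex.I)) ^ n =
      ↑(cos θ ^ n * (evenBinomialPoly ℝ n).eval (-t ^ 2)) +
        ↑(cos θ ^ n * t * (oddBinomialPoly ℝ n).eval (-t ^ 2)) * Complex.I := by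
    rw [mul_pow, one_add_pow_eq_aeval (R := ℝ), hsq, aeval_algebraMap_apply_eq_algebraMap_eval,
      aeval_algebraMap_apply_eq_algebraMap_eval, Complex.coe_algebraMap]
    push_cast
    ring
  have hdeMoivre := Complex.cos_add_sin_mul_I_pow n θ
  rw [hpolar, hexpand, ← Complex.ofReal_natCast, ← Complex.ofReal_mul, ← Complex.ofReal_cos,
    ← Complex.ofReal_sin] at hdeMoivre
  simpa only [Complex.add_im, Complex.mul_im, Complex.ofReal_re, Complex.ofReal_im, Complex.I_re,
    Complex.I_im, mul_zero, mul_one, zero_add, add_zero] using (congrArg Complex.im hdeMoivre).symm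

theorem isRoot_oddBinomialPoly {n j : ℕ} (hj : 0 < j) (hjn : 2 * j < n) :
    (oddBinomialPoly ℝ n).IsRoot (-tan (j * π / n) ^ 2) := by
  obtain ⟨hθ₀, hθ⟩ := nat_mul_pi_div_mem_Ioo hj hjn
  have hcos : 0 < cos (j * π / n) := cos_pos_of_mem_Ioo ⟨by linarith, hθ⟩
  have htan : 0 < tan (j * π / n) := tan_pos_of_pos_of_lt_pi_div_two hθ₀ hθ
  have hsin : sin (n * (j * π / n)) = 0 := by
    rw [mul_div_cancel₀ _ (by exact_mod_cast (show n ≠ 0 by omega)), sin_nat_mul_pi]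
  rw [sin_nat_mul_eq_cos_pow_mul_tan_mul_eval_oddBinomialPoly n hcos.ne'] at hsin
  exact (mul_eq_zero.1 hsin).resolve_left (by positivity)

theorem isRoot_oddBinomialPoly_succ_iff (n : ℕ) (x : ℝ) :
    (oddBinomialPoly ℝ (n + 1)).IsRoot x ↔
      ∃ j ∈ Icc 1 (n / 2), x = -tan (j * π / (n + 1)) ^ 2 := by
  classical
  set r : ℕ → ℝ := fun j => -tan (j * π / (n + 1)) ^ 2
  have hmem : ∀ j ∈ Icc 1 (n / 2), 0 < j ∧ 2 * j < n + 1 := fun j hj => by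
    rw [mem_Icc] at hj; omega
  have hroots : ∀ y ∈ (Icc 1 (n / 2)).image r, (oddBinomialPoly ℝ (n + 1)).IsRoot y := by
    simp only [mem_image, forall_exists_index, and_imp, forall_apply_eq_imp_iff₂]
    intro j hj
    simpa [r] using isRoot_oddBinomialPoly (hmem j hj).1 (hmem j hj).2
  have hinj : Set.InjOn r (Icc 1 (n / 2)) := fun a ha b hb hab => by
    have hangle := fun j hj =>
      Set.Ioo_subset_Ico_self (nat_mul_pi_div_mem_Ioo (hmem j hj).1 (hmem j hj).2)
    have := strictAntiOn_neg_tan_sq.injOn (hangle a ha) (hangle b hb) (by simpa [r] using hab)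
    field_simp at this
    exact_mod_cast this
  have hcard : (oddBinomialPoly ℝ (n + 1)).natDegree ≤ ((Icc 1 (n / 2)).image r).card := by
    rw [card_image_of_injOn hinj, Nat.card_Icc, natDegree_oddBinomialPoly_succ]; omega
  rw [isRoot_iff_mem_of_natDegree_le_card (oddBinomialPoly_ne_zero ℝ _ n.succ_ne_zero)
    hroots hcard, mem_image]
  exact ⟨fun ⟨j, hj, hx⟩ => ⟨j, hj, hx.symm⟩, fun ⟨j, hj, hx⟩ => ⟨j, hj, hx.symm⟩⟩

theorem pade_sqrt_poles_general (m ℓ : ℕ) (hℓ : ℓ = m - 1 ∨ ℓ = m) :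
    ∃ p q : Polynomial ℝ, p.natDegree = m ∧ q.natDegree = ℓ ∧ IsCoprime p q ∧
      (∀ z : ℝ, 0 < z →
        p.eval z / q.eval z =
          Real.sqrt z *
              ((1 + Real.sqrt z) ^ (m + ℓ + 1) + (1 - Real.sqrt z) ^ (m + ℓ + 1)) /
            ((1 + Real.sqrt z) ^ (m + ℓ + 1) - (1 - Real.sqrt z) ^ (m + ℓ + 1))) ∧
      (∀ x : ℝ, q.IsRoot x ↔ ∃ j ∈ Finset.Icc 1 ℓ,
        x = -(Real.tan ((j : ℝ) * Real.pi / ((m : ℝ) + ℓ + 1))) ^ 2) := by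
  have hdeg : (m + ℓ + 1) / 2 = m ∧ (m + ℓ) / 2 = ℓ := by omega
  refine ⟨evenBinomialPoly ℝ (m + ℓ + 1), oddBinomialPoly ℝ (m + ℓ + 1), ?_, ?_,
    isCoprime_evenBinomialPoly_oddBinomialPoly _,
    fun z hz => eval_evenBinomialPoly_div_eval_oddBinomialPoly _ hz, fun x => ?_⟩
  · rw [natDegree_evenBinomialPoly, hdeg.1]
  · rw [natDegree_oddBinomialPoly_succ, hdeg.2]
  · rw [isRoot_oddBinomialPoly_succ_iff, hdeg.2]
    push_cast
    rfl

/-- The poles of the type `(m, ℓ)` Padé approximant of `√z` at `z = 1`, as a rational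
function of `z`, are exactly the `ℓ` numbers `-tan²(jπ/(m+ℓ+1))`, `j = 1, …, ℓ`. -/
theorem pade_sqrt_poles (m ℓ : ℕ) (hm : 0 < m) (hℓ : ℓ = m - 1 ∨ ℓ = m) :
    ∃ p q : Polynomial ℝ, p.natDegree = m ∧ q.natDegree = ℓ ∧ IsCoprime p q ∧
      (∀ z : ℝ, 0 < z →
        p.eval z / q.eval z =
          Real.sqrt z *
              ((1 + Real.sqrt z) ^ (m + ℓ + 1) + (1 - Real.sqrt z) ^ (m + ℓ + 1)) /
            ((1 + Real.sqrt z) ^ (m + ℓ + 1) - (1 - Real.sqrt z) ^ (m + ℓ + 1))) ∧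
      (∀ x : ℝ, q.IsRoot x ↔ ∃ j ∈ Finset.Icc 1 ℓ,
        x = -(Real.tan ((j : ℝ) * Real.pi / ((m : ℝ) + ℓ + 1))) ^ 2) :=
  pade_sqrt_poles_general m ℓ hℓ
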